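/- In a Cartesian closed differential category with a parametrized fixpoint operator fix and induced fixpoint combinator Y_X := fix(eval_{X,X}), the operator fix satisfies the differential-fixpoint rule for all maps if and only if D[Y_X] = π₂ ∘ Y_{T X} ∘ λ(T(eval_{X,X}) ∘ c) holds for all objects X. -/

import Mathlib

open CategoryTheory CategoryTheory.Limits

universe v u

variable (C : Type u) [Category.{v} C] [HasFiniteProducts C]

/-- Cartesian left additive category: hom-sets are commutative monoids,
precomposition is additive, and the projections are additive maps. -/
class CartesianLeftAdditive [∀ A B : C, AddCommMonoid (A ⟶ B)] : Prop where
  comp_add : ∀ {X A B : C} (x : X ⟶ A) (f g : A ⟶ B), x ≫ (f + g) = x ≫ f + x ≫ g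
  comp_zero : ∀ {X A B : C} (x : X ⟶ A), x ≫ (0 : A ⟶ B) = 0
  add_comp_fst : ∀ {X A B : C} (x y : X ⟶ A ⨯ B),
    (x + y) ≫ (prod.fst : A ⨯ B ⟶ A) = x ≫ prod.fst + y ≫ prod.fst
  add_comp_snd : ∀ {X A B : C} (x y : X ⟶ A ⨯ B),
    (x + y) ≫ (prod.snd : A ⨯ B ⟶ B) = x ≫ prod.snd + y ≫ prod.snd
  zero_comp_fst : ∀ {X A B : C}, (0 : X ⟶ A ⨯ B) ≫ (prod.fst : A ⨯ B ⟶ A) = 0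
  zero_comp_snd : ∀ {X A B : C}, (0 : X ⟶ A ⨯ B) ≫ (prod.snd : A ⨯ B ⟶ B) = 0

/-- A differential combinator satisfying the axioms [CD.1]-[CD.7] of a
Cartesian differential category. -/
structure DiffComb [∀ A B : C, AddCommMonoid (A ⟶ B)] where
  D : ∀ {A B : C}, (A ⟶ B) → (A ⨯ A ⟶ B)
  cd1_zero : ∀ {A B : C}, D (0 : A ⟶ B) = 0
  cd1_add : ∀ {A B : C} (f g : A ⟶ B), D (f + g) = D f + D g
  cd2_zero : ∀ {A B X : C} (f : A ⟶ B) (x : X ⟶ A), prod.lift x 0 ≫ D f = 0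
  cd2_add : ∀ {A B X : C} (f : A ⟶ B) (x y z : X ⟶ A),
    prod.lift x (y + z) ≫ D f = prod.lift x y ≫ D f + prod.lift x z ≫ D f
  cd3_id : ∀ {A : C}, D (𝟙 A) = prod.snd
  cd3_fst : ∀ {A B : C},
    D (prod.fst : A ⨯ B ⟶ A) = (prod.snd : (A ⨯ B) ⨯ (A ⨯ B) ⟶ A ⨯ B) ≫ prod.fst
  cd3_snd : ∀ {A B : C},
    D (prod.snd : A ⨯ B ⟶ B) = (prod.snd : (A ⨯ B) ⨯ (A ⨯ B) ⟶ A ⨯ B) ≫ prod.snd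
  cd4 : ∀ {A B B' : C} (f : A ⟶ B) (g : A ⟶ B'), D (prod.lift f g) = prod.lift (D f) (D g)
  cd5 : ∀ {A B E : C} (f : A ⟶ B) (g : B ⟶ E), D (f ≫ g) = prod.lift (prod.fst ≫ f) (D f) ≫ D g
  cd6 : ∀ {A B X : C} (f : A ⟶ B) (x y z : X ⟶ A),
    prod.lift (prod.lift x y) (prod.lift 0 z) ≫ D (D f) = prod.lift x z ≫ D f
  cd7 : ∀ {A B X : C} (f : A ⟶ B) (x y z : X ⟶ A),
    prod.lift (prod.lift x y) (prod.lift z 0) ≫ D (D f) =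
      prod.lift (prod.lift x z) (prod.lift y 0) ≫ D (D f)

variable {C}

/-- The tangent bundle functor on maps: `T f = ⟨f ∘ π₁, D[f]⟩`. -/
noncomputable def DiffComb.T [∀ A B : C, AddCommMonoid (A ⟶ B)] (Dc : DiffComb C) {A B : C}
    (f : A ⟶ B) : A ⨯ A ⟶ B ⨯ B :=
  prod.lift (prod.fst ≫ f) (Dc.D f)

/-- The canonical middle-swap isomorphism `c = ⟨π₁,π₃,π₂,π₄⟩`. -/
noncomputable def cmap (A B X Y : C) : (A ⨯ B) ⨯ (X ⨯ Y) ⟶ (A ⨯ X) ⨯ (B ⨯ Y) :=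
  prod.lift (prod.map prod.fst prod.fst) (prod.map prod.snd prod.snd)

/-- A parametrized fixpoint operator. -/
structure ParamFix (C : Type u) [Category.{v} C] [HasFiniteProducts C] where
  fix : ∀ {A X : C}, (A ⨯ X ⟶ X) → (A ⟶ X)
  fix_eq : ∀ {A X : C} (f : A ⨯ X ⟶ X), prod.lift (𝟙 A) (fix f) ≫ f = fix f
  natural : ∀ {A B X : C} (g : A ⟶ B) (f : B ⨯ X ⟶ X),
    g ≫ fix f = fix (prod.map g (𝟙 X) ≫ f)

/-- A (chosen) Cartesian closed structure: internal homs, evaluation maps and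
currying. -/
structure ClosedStruct (C : Type u) [Category.{v} C] [HasFiniteProducts C] where
  ihom : C → C → C
  ev : ∀ (X Y : C), ihom X Y ⨯ X ⟶ Y
  curry : ∀ {A X Y : C}, (A ⨯ X ⟶ Y) → (A ⟶ ihom X Y)
  curry_eq : ∀ {A X Y : C} (f : A ⨯ X ⟶ Y), prod.map (curry f) (𝟙 X) ≫ ev X Y = f
  curry_unique : ∀ {A X Y : C} (g : A ⟶ ihom X Y) (f : A ⨯ X ⟶ Y),
    prod.map g (𝟙 X) ≫ ev X Y = f → g = curry f

/-! Since `fix f = curry f ≫ Y`, the chain rule gives `D (fix f) = T (curry f) ≫ D Y`, so the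
rule for the combinators `Y` determines `D (fix f)`. The two sides then match because
`T (curry f) ≫ curry (c ≫ T ev) = curry (c ≫ T f)`, by naturality of currying and
`c ≫ T (g × 𝟙) = (T g × T 𝟙) ≫ c`. -/

namespace DiffComb

variable [∀ A B : C, AddCommMonoid (A ⟶ B)] (Dc : DiffComb C)

theorem D_comp {A B E : C} (f : A ⟶ B) (g : B ⟶ E) : Dc.D (f ≫ g) = Dc.T f ≫ Dc.D g :=
  Dc.cd5 f g

theorem T_comp {A B E : C} (f : A ⟶ B) (g : B ⟶ E) :
    Dc.T (f ≫ g) = Dc.T f ≫ Dc.T g := by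
  apply prod.hom_ext <;> simp [DiffComb.T, D_comp, prod.lift_fst_assoc, prod.lift_snd]

theorem T_id (A : C) : Dc.T (𝟙 A) = 𝟙 (A ⨯ A) := by
  apply prod.hom_ext <;> simp [DiffComb.T, Dc.cd3_id]

theorem D_prod_map {A B X Y : C} (f : A ⟶ B) (g : X ⟶ Y) :
    Dc.D (prod.map f g) =
      prod.lift (prod.map prod.fst prod.fst ≫ Dc.D f) (prod.map prod.snd prod.snd ≫ Dc.D g) := by
  rw [← prod.lift_fst_comp_snd_comp, Dc.cd4, Dc.cd5, Dc.cd5, Dc.cd3_fst, Dc.cd3_snd,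
    prod.lift_fst_comp_snd_comp, prod.lift_fst_comp_snd_comp]

theorem cmap_comp_T_prod_map {A B X Y : C} (f : A ⟶ B) (g : X ⟶ Y) :
    cmap A A X X ≫ Dc.T (prod.map f g) = prod.map (Dc.T f) (Dc.T g) ≫ cmap B B Y Y := by
  apply prod.hom_ext <;> apply prod.hom_ext <;>
    simp [DiffComb.T, cmap, D_prod_map, prod.lift_fst, prod.lift_snd, prod.lift_fst_assoc,
      ← prod.comp_lift]

end DiffComb

theorem ClosedStruct.comp_curry (Cl : ClosedStruct C) {A B X Y : C} (g : A ⟶ B)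
    (h : B ⨯ X ⟶ Y) : g ≫ Cl.curry h = Cl.curry (prod.map g (𝟙 X) ≫ h) :=
  Cl.curry_unique _ _ (by rw [prod.map_comp_id, Category.assoc, Cl.curry_eq])

theorem ParamFix.curry_comp_fix_ev (P : ParamFix C) (Cl : ClosedStruct C) {A X : C}
    (f : A ⨯ X ⟶ X) : Cl.curry f ≫ P.fix (Cl.ev X X) = P.fix f := by
  rw [P.natural, Cl.curry_eq]

theorem T_curry_comp_curry_cmap_T_ev [∀ A B : C, AddCommMonoid (A ⟶ B)] (Dc : DiffComb C)
    (Cl : ClosedStruct C) {A X Y : C} (f : A ⨯ X ⟶ Y) :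
    Dc.T (Cl.curry f) ≫ Cl.curry (cmap (Cl.ihom X Y) (Cl.ihom X Y) X X ≫ Dc.T (Cl.ev X Y)) =
      Cl.curry (cmap A A X X ≫ Dc.T f) := by
  rw [Cl.comp_curry, ← Dc.T_id, ← Category.assoc, ← Dc.cmap_comp_T_prod_map, Category.assoc,
    ← Dc.T_comp, Cl.curry_eq]

/-- in a Cartesian closed differential category with a
parametrized fixpoint operator `fix` and fixpoint combinator `Y_X = fix(ev)`,
`fix` satisfies the differential-fixpoint rule for all maps iff
`D[Y_X] = π₂ ∘ Y_{TX} ∘ λ(T(ev) ∘ c)` for all objects `X`. -/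
theorem closed_diff_fix_iff_combinator_rule
    [∀ A B : C, AddCommMonoid (A ⟶ B)] [CartesianLeftAdditive C]
    (Dc : DiffComb C) (Cl : ClosedStruct C) (P : ParamFix C)
    (hev_lin : ∀ {X Y Z : C} (h k : Z ⟶ Cl.ihom X Y) (x : Z ⟶ X),
      prod.lift (prod.lift h x) (prod.lift k 0) ≫ Dc.D (Cl.ev X Y) =
        prod.lift k x ≫ Cl.ev X Y) :
    (∀ {A X : C} (f : A ⨯ X ⟶ X),
      Dc.D (P.fix f) = P.fix (cmap A A X X ≫ Dc.T f) ≫ prod.snd) ↔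
    (∀ X : C,
      Dc.D (P.fix (Cl.ev X X)) =
        Cl.curry (cmap (Cl.ihom X X) (Cl.ihom X X) X X ≫ Dc.T (Cl.ev X X)) ≫
          P.fix (Cl.ev (X ⨯ X) (X ⨯ X)) ≫ prod.snd) := by
  constructor
  · intro rule X
    rw [rule, ← P.curry_comp_fix_ev Cl, Category.assoc]
  · intro combinator_rule A X f
    calc Dc.D (P.fix f) = Dc.D (Cl.curry f ≫ P.fix (Cl.ev X X)) := by
          rw [P.curry_comp_fix_ev]
      _ = Dc.T (Cl.curry f) ≫ Cl.curry (cmap _ _ X X ≫ Dc.T (Cl.ev X X)) ≫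
            P.fix (Cl.ev (X ⨯ X) (X ⨯ X)) ≫ prod.snd := by
          rw [Dc.D_comp, combinator_rule]
      _ = P.fix (cmap A A X X ≫ Dc.T f) ≫ prod.snd := by
          rw [← Category.assoc, T_curry_comp_curry_cmap_T_ev, ← Category.assoc,
            P.curry_comp_fix_ev]
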